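/- arXiv:2006.00336 — 4 statements merged into one kernel-verified Lean document; each statement's English description precedes it below -/
import Mathlib

section
/- Let K be a C-symmetric convex body in C^n that is also a real ellipsoid (the image of the unit ball of R^{2n} under a real linear isomorphism, centered at the origin). Then K is a complex ellipsoid, i.e., the image of the unit ball of C^n under a C-linear isomorphism. -/
open Metric Submodule Pointwise

noncomputable section

abbrev Cn (n : ℕ) := EuclideanSpace ℂ (Fin n)

def IsConvexBody {E : Type*} [NormedAddCommGroup E] [InnerProductSpace ℂ E]
    (K : Set E) : Prop :=
  IsCompact K ∧ Convex ℝ K ∧ (interior K).Nonempty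

def CSymmetric {E : Type*} [NormedAddCommGroup E] [InnerProductSpace ℂ E]
    (K : Set E) : Prop :=
  ∀ c : ℂ, ‖c‖ = 1 → c • K = K

/-!
The real ellipsoid `K = f '' closedBall 0 1` is the unit ball of the Euclidean norm
`x ↦ ‖f⁻¹ x‖`, which is the gauge of `K`. Invariance of `K` under the unit circle makes `K`
balanced over `ℂ`, so this gauge is `ℂ`-homogeneous. A `ℂ`-homogeneous norm satisfying the
parallelogram law comes from a complex inner product (Jordan–von Neumann), and an orthonormal
basis for that inner product is a `ℂ`-linear map carrying the unit ball onto `K`.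
-/

theorem gauge_preimage_linearEquiv {E F : Type*} [AddCommGroup E] [Module ℝ E]
    [AddCommGroup F] [Module ℝ F] (f : E ≃ₗ[ℝ] F) (s : Set F) (x : E) :
    gauge (f ⁻¹' s) x = gauge s (f x) := by
  simp only [gauge_def', Set.mem_preimage, map_smul]

theorem Balanced.of_norm_eq_one_smul_eq {E : Type*} [AddCommGroup E] [Module ℂ E]
    {s : Set E} (hs : Balanced ℝ s) (h : ∀ u : ℂ, ‖u‖ = 1 → u • s = s) : Balanced ℂ s := by
  intro a ha
  have hu : ‖Complex.exp (a.arg * Complex.I)‖ = 1 := Complex.norm_exp_ofReal_mul_I _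
  calc a • s = (‖a‖ : ℝ) • Complex.exp (a.arg * Complex.I) • s := by
        rw [← smul_assoc, Complex.real_smul, Complex.norm_mul_exp_arg_mul_I]
    _ = (‖a‖ : ℝ) • s := by rw [h _ hu]
    _ ⊆ s := hs _ (by simpa using ha)

theorem LinearEquiv.norm_symm_smul_of_unit_smul_image_closedBall {E F : Type*}
    [AddCommGroup E] [Module ℂ E] [NormedAddCommGroup F] [NormedSpace ℝ F] (f : F ≃ₗ[ℝ] E)
    (h : ∀ u : ℂ, ‖u‖ = 1 → u • f '' closedBall 0 1 = f '' closedBall 0 1) (c : ℂ) (x : E) :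
    ‖f.symm (c • x)‖ = ‖c‖ * ‖f.symm x‖ := by
  have hgauge : ∀ y, gauge (f '' closedBall 0 1) y = ‖f.symm y‖ := fun y => by
    rw [f.image_eq_preimage_symm, gauge_preimage_linearEquiv, gauge_closedBall zero_le_one,
      div_one]
  have hbal : Balanced ℂ (f '' closedBall 0 1) := by
    refine .of_norm_eq_one_smul_eq ?_ h
    rw [f.image_eq_preimage_symm]
    exact balanced_closedBall_zero.mulActionHom_preimage (f := f.symm.toLinearMap.toMulActionHom)
  rw [← hgauge, ← hgauge, gauge_smul hbal]

section

variable {E F : Type*} [AddCommGroup E] [Module ℂ E] [NormedAddCommGroup F] [InnerProductSpace ℝ F]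

/-- `E` with the norm `x ↦ ‖f.symm x‖`, whose closed unit ball is `f '' closedBall 0 1`. -/
def Renormed (_f : F ≃ₗ[ℝ] E) : Type _ := E

namespace Renormed

variable (f : F ≃ₗ[ℝ] E)

instance : AddCommGroup (Renormed f) := inferInstanceAs (AddCommGroup E)

instance : Module ℂ (Renormed f) := inferInstanceAs (Module ℂ E)

instance [FiniteDimensional ℂ E] : FiniteDimensional ℂ (Renormed f) :=
  inferInstanceAs (FiniteDimensional ℂ E)

instance : NormedAddCommGroup (Renormed f) :=
  NormedAddCommGroup.induced (Renormed f) F (f.symm.toAddEquiv.toAddMonoidHom : E →+ F)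
    f.symm.injective

instance : InnerProductSpaceable (Renormed f) where
  parallelogram_identity x y := by
    have h := parallelogram_law_with_norm_mul ℝ (f.symm (show E from x)) (f.symm (show E from y))
    rwa [← map_add, ← map_sub] at h

end Renormed

theorem LinearEquiv.exists_linearEquiv_euclideanSpace_norm_eq [FiniteDimensional ℂ E] {n : ℕ}
    (hn : Module.finrank ℂ E = n) (f : F ≃ₗ[ℝ] E)
    (hf : ∀ (c : ℂ) (x : E), ‖f.symm (c • x)‖ = ‖c‖ * ‖f.symm x‖) :
    ∃ L : E ≃ₗ[ℂ] EuclideanSpace ℂ (Fin n), ∀ x, ‖L x‖ = ‖f.symm x‖ := by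
  let _ : NormedSpace ℂ (Renormed f) := ⟨fun c x => (hf c x).le⟩
  let _ : InnerProductSpace ℂ (Renormed f) :=
    .ofNorm ℂ InnerProductSpaceable.parallelogram_identity
  let b := (stdOrthonormalBasis ℂ (Renormed f)).reindex (finCongr hn)
  exact ⟨b.repr.toLinearEquiv, b.repr.norm_map⟩

end

theorem stmt0_general {n : ℕ} (K : Set (Cn n))
    (hsym : CSymmetric K)
    (hreal : ∃ g : Cn n ≃L[ℝ] Cn n, g '' closedBall 0 1 = K) :
    ∃ h : Cn n ≃L[ℂ] Cn n, h '' closedBall 0 1 = K := by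
  obtain ⟨g, rfl⟩ := hreal
  have hhom := g.toLinearEquiv.norm_symm_smul_of_unit_smul_image_closedBall hsym
  obtain ⟨L, hL⟩ :=
    g.toLinearEquiv.exists_linearEquiv_euclideanSpace_norm_eq finrank_euclideanSpace_fin hhom
  refine ⟨L.symm.toContinuousLinearEquiv, ?_⟩
  ext x
  simp only [ContinuousLinearEquiv.image_eq_preimage_symm, Set.mem_preimage,
    mem_closedBall_zero_iff]
  show ‖L x‖ ≤ 1 ↔ ‖g.symm x‖ ≤ 1
  rw [hL]
  rfl

/-- A C-symmetric convex body in ℂⁿ that is a real ellipsoid (image of the unit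
ball under an invertible real-linear map) is a complex ellipsoid. -/
theorem stmt0 {n : ℕ} (K : Set (Cn n))
    (hbody : IsConvexBody K) (hsym : CSymmetric K)
    (hreal : ∃ g : Cn n ≃L[ℝ] Cn n, g '' closedBall 0 1 = K) :
    ∃ h : Cn n ≃L[ℂ] Cn n, h '' closedBall 0 1 = K :=
  stmt0_general K hsym hreal
end
end

section
/- Let B ⊆ C^{n+1}, n ≥ 2, be a C-symmetric convex body all of whose sections by complex hyperplanes through the origin are complex ellipsoids. Then B is a complex ellipsoid. -/
open Metric Submodule Pointwise

noncomputable section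

def IsCEllipsoid {E : Type*} [NormedAddCommGroup E] [InnerProductSpace ℂ E]
    (K : Set E) : Prop :=
  ∃ g : E ≃L[ℂ] E, g '' closedBall 0 1 = K

/-!
The gauge of `B` is a norm whose closed unit ball is `B`. On a complex hyperplane `Γ` it is the
gauge of the ellipsoid `Γ ∩ B = g(ball)`, i.e. `w ↦ ‖g⁻¹ w‖`, so it satisfies the parallelogram law
there. Since `n + 1 ≥ 3`, any two vectors lie in a common complex hyperplane, hence the gauge
satisfies the parallelogram law everywhere. By the Jordan–von Neumann theorem it is then the norm of
a Hermitian inner product, and the closed unit ball of such a norm is a complex ellipsoid.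
-/

open Module Topology

theorem exists_finrank_add_one_eq_and_mem_and_mem {K V : Type*} [Field K] [AddCommGroup V]
    [Module K V] [FiniteDimensional K V] (hV : 2 < finrank K V) (x y : V) :
    ∃ Γ : Submodule K V, finrank K Γ + 1 = finrank K V ∧ x ∈ Γ ∧ y ∈ Γ := by
  have hlt : span K (Set.range ![x, y]) < ⊤ :=
    Submodule.lt_top_of_finrank_lt_finrank ((finrank_range_le_card _).trans_lt (by simpa using hV))
  obtain ⟨f, hf, hle⟩ := (span K (Set.range ![x, y])).exists_le_ker_of_lt_top hlt
  exact ⟨LinearMap.ker f, Module.Dual.finrank_ker_add_one_of_ne_zero hf,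
    hle (subset_span ⟨0, rfl⟩), hle (subset_span ⟨1, rfl⟩)⟩

lemma gauge_preimage {E F : Type*} [AddCommGroup E] [Module ℝ E] [AddCommGroup F] [Module ℝ F]
    (f : E →ₗ[ℝ] F) (s : Set F) (x : E) : gauge (f ⁻¹' s) x = gauge s (f x) := by
  simp only [gauge_def', Set.mem_preimage, map_smul]

def ParallelogramLaw {E : Type*} [AddCommGroup E] (f : E → ℝ) : Prop :=
  ∀ x y, f (x + y) * f (x + y) + f (x - y) * f (x - y) = 2 * (f x * f x + f y * f y)

lemma gauge_image_closedBall {E : Type*} [NormedAddCommGroup E] [InnerProductSpace ℂ E]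
    (g : E ≃L[ℂ] E) (x : E) : gauge (g '' closedBall 0 1) x = ‖g.symm x‖ := by
  rw [g.image_eq_preimage_symm]
  refine (gauge_preimage (g.symm.toLinearEquiv.toLinearMap.restrictScalars ℝ) _ x).trans ?_
  simp [gauge_closedBall]

lemma gauge_coe_preimage {E : Type*} [NormedAddCommGroup E] [InnerProductSpace ℂ E]
    (Γ : Submodule ℂ E) (s : Set E) (x : Γ) : gauge ((↑) ⁻¹' s : Set Γ) x = gauge s x :=
  gauge_preimage (Γ.subtype.restrictScalars ℝ) s x

lemma IsCEllipsoid.parallelogramLaw_gauge {E : Type*} [NormedAddCommGroup E]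
    [InnerProductSpace ℂ E] {K : Set E} (hK : IsCEllipsoid K) : ParallelogramLaw (gauge K) := by
  obtain ⟨g, rfl⟩ := hK
  intro x y
  simp only [gauge_image_closedBall, map_add, map_sub]
  exact parallelogram_law_with_norm_mul ℂ _ _

theorem parallelogramLaw_gauge_of_isCEllipsoid_sections {E : Type*} [NormedAddCommGroup E]
    [InnerProductSpace ℂ E] [FiniteDimensional ℂ E] {n : ℕ} (hn : 2 ≤ n)
    (hE : finrank ℂ E = n + 1) {K : Set E}
    (hsec : ∀ Γ : Submodule ℂ E, finrank ℂ Γ = n → IsCEllipsoid ((↑) ⁻¹' K : Set Γ)) :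
    ParallelogramLaw (gauge K) := by
  intro x y
  obtain ⟨Γ, hΓ, hx, hy⟩ := exists_finrank_add_one_eq_and_mem_and_mem (K := ℂ) (by omega) x y
  simpa only [gauge_coe_preimage, Submodule.coe_add, Submodule.coe_sub] using
    (hsec Γ (by omega)).parallelogramLaw_gauge ⟨x, hx⟩ ⟨y, hy⟩

theorem Seminorm.exists_linearEquiv_euclideanSpace_of_parallelogramLaw {𝕜 E : Type*} [RCLike 𝕜]
    [AddCommGroup E] [Module 𝕜 E] [FiniteDimensional 𝕜 E] (p : Seminorm 𝕜 E)
    (hp : ∀ x, p x = 0 → x = 0) (hpar : ParallelogramLaw p) :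
    ∃ e : E ≃ₗ[𝕜] EuclideanSpace 𝕜 (Fin (finrank 𝕜 E)), ∀ x, ‖e x‖ = p x := by
  -- `E` carries no norm of its own, so `p` can be installed as one.
  let : NormedAddCommGroup E :=
    AddGroupNorm.toNormedAddCommGroup { p.toAddGroupSeminorm with eq_zero_of_map_eq_zero' := hp }
  let : NormedSpace 𝕜 E := ⟨fun c x => (map_smul_eq_mul p c x).le⟩
  let : InnerProductSpace 𝕜 E := InnerProductSpace.ofNorm 𝕜 hpar
  exact ⟨(stdOrthonormalBasis 𝕜 E).repr.toLinearEquiv, (stdOrthonormalBasis 𝕜 E).repr.norm_map⟩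

section CSymmetric

variable {E : Type*} [NormedAddCommGroup E] [InnerProductSpace ℂ E] {K : Set E}

lemma CSymmetric.zero_mem_interior (hK : IsConvexBody K) (hsym : CSymmetric K) :
    (0 : E) ∈ interior K := by
  obtain ⟨-, hconv, x, hx⟩ := hK
  have hnegx : -x ∈ interior K := by
    rw [← hsym (-1) (by simp), interior_smul₀ (by simp)]
    exact ⟨x, hx, by simp⟩
  simpa using hconv.interior.midpoint_mem hx hnegx

lemma CSymmetric.balanced (hsym : CSymmetric K) (hconv : Convex ℝ K) (h0 : (0 : E) ∈ K) :
    Balanced ℂ K := by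
  refine balanced_iff_smul_mem.mpr fun a ha x hx => ?_
  rcases eq_or_ne a 0 with rfl | ha0
  · simpa using h0
  have hu : ‖a / ‖a‖‖ = 1 := by simp [ha0]
  have hux : (a / ‖a‖) • x ∈ K := by
    rw [← hsym _ hu]
    exact Set.smul_mem_smul_set hx
  have : a • x = ‖a‖ • ((a / ‖a‖) • x) := by
    rw [← Complex.coe_smul, smul_smul, mul_div_cancel₀ _ (by simpa using ha0)]
  rw [this]
  exact hconv.smul_mem_of_zero_mem h0 hux ⟨norm_nonneg a, ha⟩

end CSymmetric

theorem IsConvexBody.isCEllipsoid_of_parallelogramLaw {E : Type*} [NormedAddCommGroup E]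
    [InnerProductSpace ℂ E] [FiniteDimensional ℂ E] {K : Set E} (hK : IsConvexBody K)
    (hsym : CSymmetric K) (hpar : ParallelogramLaw (gauge K)) : IsCEllipsoid K := by
  have hnhds : K ∈ 𝓝 0 := mem_interior_iff_mem_nhds.mp (hsym.zero_mem_interior hK)
  obtain ⟨hcomp, hconv, -⟩ := hK
  have habs : Absorbent ℝ K := absorbent_nhds_zero hnhds
  let p := gaugeSeminorm (hsym.balanced hconv (mem_of_mem_nhds hnhds)) hconv habs
  have hp : ∀ x, p x = 0 → x = 0 := fun x =>
    (gauge_eq_zero habs (NormedSpace.isVonNBounded_of_isBounded ℝ hcomp.isBounded)).mp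
  obtain ⟨e, he⟩ := p.exists_linearEquiv_euclideanSpace_of_parallelogramLaw hp hpar
  let φ := (stdOrthonormalBasis ℂ E).repr
  refine ⟨(e.trans φ.symm.toLinearEquiv).symm.toContinuousLinearEquiv, ?_⟩
  ext x
  rw [ContinuousLinearEquiv.image_eq_preimage_symm]
  simpa [he, p, hcomp.isClosed.closure_eq] using gauge_le_one_iff_mem_closure hconv hnhds

/-- If all complex hyperplane sections of a C-symmetric convex body
`B ⊆ ℂ^{n+1}`, `n ≥ 2`, are complex ellipsoids, then `B` is a complex ellipsoid. -/
theorem stmt1 {n : ℕ} (hn : 2 ≤ n) (B : Set (Cn (n + 1)))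
    (hbody : IsConvexBody B) (hsym : CSymmetric B)
    (hsec : ∀ Γ : Submodule ℂ (Cn (n + 1)), Module.finrank ℂ Γ = n →
      IsCEllipsoid ((↑) ⁻¹' B : Set Γ)) :
    IsCEllipsoid B :=
  hbody.isCEllipsoid_of_parallelogramLaw hsym
    (parallelogramLaw_gauge_of_isCEllipsoid_sections hn finrank_euclideanSpace_fin hsec)
end
end

section
/- Let K ⊆ C^n be a C-symmetric convex body whose unique minimal-volume circumscribed complex ellipsoid centered at the origin is the unit ball. Then every C-linear isomorphism g of C^n with positive real determinant satisfying g(K) = K lies in SU(n). -/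
open Metric Submodule Pointwise MeasureTheory
open scoped ENNReal

noncomputable section

/-! Write `B` for the unit ball. Since `g(K) = K`, the complex ellipsoids `g(B)` and `g⁻¹(B)` both
contain `K`, so neither has smaller volume than `B`. Scaling `vol B ≤ vol g⁻¹(B)` by the Jacobian
of `g` gives `vol g(B) ≤ vol B`, hence equality, and uniqueness of the minimal ellipsoid gives
`g(B) = B`. A linear map preserving the unit ball is an isometry, so `|det g| = 1`, and a positive
real number of modulus one is `1`. -/

theorem MeasureTheory.Measure.addHaar_image_le_of_le_addHaar_symm_image {E : Type*}
    [NormedAddCommGroup E] [NormedSpace ℝ E] [MeasurableSpace E] [BorelSpace E]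
    [FiniteDimensional ℝ E] (μ : Measure E) [μ.IsAddHaarMeasure] (e : E ≃ₗ[ℝ] E) {s : Set E}
    (h : μ s ≤ μ (e.symm '' s)) : μ (e '' s) ≤ μ s :=
  calc μ (e '' s) = ENNReal.ofReal |LinearMap.det (e : E →ₗ[ℝ] E)| * μ s :=
        μ.addHaar_image_linearMap _ s
    _ ≤ ENNReal.ofReal |LinearMap.det (e : E →ₗ[ℝ] E)| * μ (e.symm '' s) := by gcongr
    _ = μ (e '' (e.symm '' s)) := (μ.addHaar_image_linearMap _ _).symm
    _ = μ s := by simp only [Set.image_image, LinearEquiv.apply_symm_apply, Set.image_id']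

theorem ContinuousLinearMap.norm_apply_le_of_mapsTo_closedBall {𝕜 E F : Type*} [RCLike 𝕜]
    [NormedAddCommGroup E] [NormedSpace 𝕜 E] [NormedAddCommGroup F] [NormedSpace 𝕜 F]
    (f : E →L[𝕜] F) (hf : Set.MapsTo f (closedBall 0 1) (closedBall 0 1)) (x : E) :
    ‖f x‖ ≤ ‖x‖ := by
  have hnorm : ‖f‖ ≤ 1 := f.opNorm_le_of_unit_norm zero_le_one fun y hy =>
    mem_closedBall_zero_iff.mp (hf (mem_closedBall_zero_iff.mpr hy.le))
  simpa using f.le_of_opNorm_le hnorm x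

theorem ContinuousLinearEquiv.norm_map_of_image_closedBall_eq {𝕜 E : Type*} [RCLike 𝕜]
    [NormedAddCommGroup E] [NormedSpace 𝕜 E] (e : E ≃L[𝕜] E)
    (he : e '' closedBall 0 1 = closedBall 0 1) (x : E) : ‖e x‖ = ‖x‖ := by
  have he' : e.symm '' closedBall 0 1 = closedBall 0 1 := by
    rw [← he, e.symm_image_image, he]
  refine le_antisymm ((e : E →L[𝕜] E).norm_apply_le_of_mapsTo_closedBall
    (Set.mapsTo_iff_image_subset.2 he.subset) x) ?_
  simpa using (e.symm : E →L[𝕜] E).norm_apply_le_of_mapsTo_closedBall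
    (Set.mapsTo_iff_image_subset.2 he'.subset) (e x)

theorem LinearMap.norm_det_eq_one_of_norm_map {𝕜 E : Type*} [RCLike 𝕜] [NormedAddCommGroup E]
    [InnerProductSpace 𝕜 E] [FiniteDimensional 𝕜 E] (f : E →ₗ[𝕜] E) (hf : ∀ x, ‖f x‖ = ‖x‖) :
    ‖LinearMap.det f‖ = 1 := by
  rw [← f.normDet_eq_norm_det]
  exact LinearIsometry.normDet_eq_one ⟨f, hf⟩

theorem image_closedBall_eq_of_isMinimalCEllipsoid {E : Type*} [NormedAddCommGroup E]
    [InnerProductSpace ℂ E] [FiniteDimensional ℂ E] [MeasurableSpace E] [BorelSpace E]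
    (μ : Measure E) [μ.IsAddHaarMeasure] {K : Set E} (hsub : K ⊆ closedBall 0 1)
    (hmin : ∀ E' : Set E, IsCEllipsoid E' → K ⊆ E' →
      μ (closedBall (0 : E) 1) ≤ μ E' ∧ (μ E' = μ (closedBall (0 : E) 1) → E' = closedBall 0 1))
    (g : E ≃L[ℂ] E) (hKg : g '' K = K) : g '' closedBall 0 1 = closedBall 0 1 := by
  have hcirc : ∀ h : E ≃L[ℂ] E, h '' K = K →
      IsCEllipsoid (h '' closedBall 0 1) ∧ K ⊆ h '' closedBall 0 1 := fun h hK =>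
    ⟨⟨h, rfl⟩, hK.symm.subset.trans (Set.image_mono hsub)⟩
  have hKg' : g.symm '' K = K := by simpa only [hKg] using g.symm_image_image K
  have hle : μ (g '' closedBall 0 1) ≤ μ (closedBall 0 1) :=
    μ.addHaar_image_le_of_le_addHaar_symm_image (g.toLinearEquiv.restrictScalars ℝ)
      (hmin _ (hcirc g.symm hKg').1 (hcirc g.symm hKg').2).1
  have hge := hmin _ (hcirc g hKg).1 (hcirc g hKg).2
  exact hge.2 (le_antisymm hle hge.1)

theorem stmt11_general {n : ℕ} [MeasurableSpace (Cn n)] [BorelSpace (Cn n)]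
    (μ : Measure (Cn n)) [μ.IsAddHaarMeasure]
    (K : Set (Cn n))
    (hsub : K ⊆ closedBall 0 1)
    (hmin : ∀ E : Set (Cn n), IsCEllipsoid E → K ⊆ E →
      μ (closedBall (0 : Cn n) 1) ≤ μ E ∧
        (μ E = μ (closedBall (0 : Cn n) 1) → E = closedBall 0 1))
    (g : Cn n ≃ₗ[ℂ] Cn n)
    (hdet : ∃ r : ℝ, 0 < r ∧ LinearMap.det (g : Cn n →ₗ[ℂ] Cn n) = (r : ℂ))
    (hKg : g '' K = K) :
    (∀ x : Cn n, ‖g x‖ = ‖x‖) ∧ LinearMap.det (g : Cn n →ₗ[ℂ] Cn n) = 1 := by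
  obtain ⟨r, hr, hdetr⟩ := hdet
  have hball :=
    image_closedBall_eq_of_isMinimalCEllipsoid μ hsub hmin g.toContinuousLinearEquiv hKg
  have hnorm : ∀ x, ‖g x‖ = ‖x‖ :=
    g.toContinuousLinearEquiv.norm_map_of_image_closedBall_eq hball
  have hr_one := LinearMap.norm_det_eq_one_of_norm_map (g : Cn n →ₗ[ℂ] Cn n) hnorm
  rw [hdetr, Complex.norm_real, Real.norm_of_nonneg hr.le] at hr_one
  exact ⟨hnorm, by rw [hdetr, hr_one, Complex.ofReal_one]⟩

/-- If the unique minimal-volume circumscribed complex ellipsoid (centred at the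
origin) of a C-symmetric convex body `K ⊆ ℂⁿ` is the unit ball (volume being any
Haar measure on `ℂⁿ`), then every C-linear automorphism of `ℂⁿ` with positive real
determinant preserving `K` is in `SU(n)`: it is an isometry with determinant `1`. -/
theorem stmt11 {n : ℕ} [MeasurableSpace (Cn n)] [BorelSpace (Cn n)]
    (μ : Measure (Cn n)) [μ.IsAddHaarMeasure]
    (K : Set (Cn n)) (hbody : IsConvexBody K) (hsym : CSymmetric K)
    (hsub : K ⊆ closedBall 0 1)
    (hmin : ∀ E : Set (Cn n), IsCEllipsoid E → K ⊆ E →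
      μ (closedBall (0 : Cn n) 1) ≤ μ E ∧
        (μ E = μ (closedBall (0 : Cn n) 1) → E = closedBall 0 1))
    (g : Cn n ≃ₗ[ℂ] Cn n)
    (hdet : ∃ r : ℝ, 0 < r ∧ LinearMap.det (g : Cn n →ₗ[ℂ] Cn n) = (r : ℂ))
    (hKg : g '' K = K) :
    (∀ x : Cn n, ‖g x‖ = ‖x‖) ∧ LinearMap.det (g : Cn n →ₗ[ℂ] Cn n) = 1 :=
  stmt11_general μ K hsub hmin g hdet hKg
end
end

section
/- Let K ⊆ C^n be a complex body of revolution with axis L, hyperplane of revolution H = L^⊥, such that H ∩ K equals the unit ball of H and Γ ∩ K equals the unit ball of Γ for some complex hyperplane Γ through the origin containing L. Then K equals the unit ball of C^n. -/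
open Metric Submodule Pointwise

noncomputable section

def IsBodyOfRev {E : Type*} [NormedAddCommGroup E] [InnerProductSpace ℂ E]
    (K : Set E) (L : Submodule ℂ E) : Prop :=
  CSymmetric K ∧ IsConvexBody K ∧ Module.finrank ℂ L = 1 ∧
  ∀ v ∈ L, ({x | x - v ∈ Lᗮ} ∩ K = ∅) ∨ (∃ p, {x | x - v ∈ Lᗮ} ∩ K = {p}) ∨
    (∃ r > (0:ℝ), {x | x - v ∈ Lᗮ} ∩ K = {x | x - v ∈ Lᗮ ∧ ‖x - v‖ ≤ r})

def IsCLinearBodyOfRevAx {E : Type*} [NormedAddCommGroup E] [InnerProductSpace ℂ E]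
    (K : Set E) (Lax H : Submodule ℂ E) : Prop :=
  ∃ (f : E ≃L[ℂ] E) (K₀ : Set E) (L₀ : Submodule ℂ E),
    IsBodyOfRev K₀ L₀ ∧ K = f '' K₀ ∧
    Lax = L₀.map ((f : E →L[ℂ] E) : E →ₗ[ℂ] E) ∧ H = L₀ᗮ.map ((f : E →L[ℂ] E) : E →ₗ[ℂ] E)

def IsCLinearBodyOfRevHyp {E : Type*} [NormedAddCommGroup E] [InnerProductSpace ℂ E]
    (K : Set E) (H : Submodule ℂ E) : Prop :=
  ∃ Lax, IsCLinearBodyOfRevAx K Lax H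

def IsCLinearBodyOfRev {E : Type*} [NormedAddCommGroup E] [InnerProductSpace ℂ E]
    (K : Set E) : Prop :=
  ∃ Lax H, IsCLinearBodyOfRevAx K Lax H

/-! Since `L ≤ Γ` and `dim Γ > dim L`, `Γ` contains a unit vector `w ⟂ L`. For `v ∈ L` the
real line `v + ℝ w` lies in `Γ`, so `K` meets it exactly in the unit ball. This line passes
through the centre of the slice of `K` over `v`, hence reads off that slice: two points
`v ± √(1 - ‖v‖²) w` when `‖v‖ < 1` force a ball of radius `√(1 - ‖v‖²)`, and `‖v‖ = 1` forces
the point `{v}`. For `‖v‖ > 1` the slice is empty by convexity, since `0 ∈ K`. By Pythagoras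
these are exactly the slices of the unit ball. -/

section

variable {𝕜 E : Type*} [RCLike 𝕜] [NormedAddCommGroup E] [InnerProductSpace 𝕜 E]

lemma norm_sq_eq_add_of_sub_mem_orthogonal {L : Submodule 𝕜 E} {v x : E} (hv : v ∈ L)
    (hx : x - v ∈ Lᗮ) : ‖x‖ ^ 2 = ‖v‖ ^ 2 + ‖x - v‖ ^ 2 := by
  have h := norm_add_sq_eq_norm_sq_add_norm_sq_of_inner_eq_zero v (x - v)
    (Submodule.inner_right_of_mem_orthogonal hv hx)
  rw [add_sub_cancel] at h
  simpa only [sq] using h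

lemma exists_norm_eq_one_mem_orthogonal_of_finrank_lt [FiniteDimensional 𝕜 E]
    {L Γ : Submodule 𝕜 E} (h : Module.finrank 𝕜 L < Module.finrank 𝕜 Γ) :
    ∃ w ∈ Γ, w ∈ Lᗮ ∧ ‖w‖ = 1 := by
  have hsup := (Γ ⊔ Lᗮ).finrank_le
  have hinf := Submodule.finrank_sup_add_finrank_inf_eq Γ Lᗮ
  have hperp := L.finrank_add_finrank_orthogonal
  have hne : Γ ⊓ Lᗮ ≠ ⊥ := Submodule.one_le_finrank_iff.mp (by omega)
  obtain ⟨u, hu, hu0⟩ := Submodule.exists_mem_ne_zero_of_ne_bot hne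
  exact ⟨_, Γ.smul_mem _ hu.1, Lᗮ.smul_mem _ hu.2, norm_smul_inv_norm hu0⟩

end

section

variable {E : Type*} [NormedAddCommGroup E] [InnerProductSpace ℂ E] {K : Set E}
  {L : Submodule ℂ E} {v w : E}

lemma norm_ofReal_smul_of_norm_eq_one (hw : ‖w‖ = 1) (t : ℝ) : ‖(t : ℂ) • w‖ = |t| := by
  rw [norm_smul, hw, mul_one, Complex.norm_real, Real.norm_eq_abs]

lemma IsBodyOfRev.slice_trichotomy (hK : IsBodyOfRev K L) (hv : v ∈ L) :
    (∀ x, x - v ∈ Lᗮ → x ∉ K) ∨ (∃ p, ∀ x, x - v ∈ Lᗮ → (x ∈ K ↔ x = p)) ∨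
      ∃ r > (0 : ℝ), ∀ x, x - v ∈ Lᗮ → (x ∈ K ↔ ‖x - v‖ ≤ r) := by
  rcases hK.2.2.2 v hv with hempty | ⟨p, hp⟩ | ⟨r, hr, hball⟩
  · exact Or.inl fun x hx hxK => (hempty ▸ ⟨hx, hxK⟩ : x ∈ (∅ : Set E))
  · refine Or.inr (Or.inl ⟨p, fun x hx => ?_⟩)
    simpa [hx] using Set.ext_iff.mp hp x
  · refine Or.inr (Or.inr ⟨r, hr, fun x hx => ?_⟩)
    simpa [hx] using Set.ext_iff.mp hball x

lemma IsBodyOfRev.mem_iff_of_norm_lt_one (hK : IsBodyOfRev K L) (hwL : w ∈ Lᗮ)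
    (hw : ‖w‖ = 1) (hKw : ∀ v ∈ L, ∀ t : ℝ, v + (t : ℂ) • w ∈ K ↔ ‖v‖ ^ 2 + t ^ 2 ≤ 1)
    (hv : v ∈ L) (hv1 : ‖v‖ < 1) {x : E} (hx : x - v ∈ Lᗮ) :
    x ∈ K ↔ ‖v‖ ^ 2 + ‖x - v‖ ^ 2 ≤ 1 := by
  have hsub (t : ℝ) : v + (t : ℂ) • w - v ∈ Lᗮ := by
    simpa using Lᗮ.smul_mem (t : ℂ) hwL
  set t := √(1 - ‖v‖ ^ 2)
  have ht : 0 < t := Real.sqrt_pos.mpr (by nlinarith [norm_nonneg v])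
  have ht2 : t ^ 2 = 1 - ‖v‖ ^ 2 := Real.sq_sqrt (by nlinarith [norm_nonneg v])
  have htK (s : ℝ) (hs : s ^ 2 = t ^ 2) : v + (s : ℂ) • w ∈ K := (hKw v hv s).mpr (by linarith)
  rcases hK.slice_trichotomy hv with hempty | ⟨p, hp⟩ | ⟨r, hr, hball⟩
  · exact absurd (htK t rfl) (hempty _ (hsub t))
  · have heq : v + (t : ℂ) • w = v + ((-t : ℝ) : ℂ) • w :=
      ((hp _ (hsub t)).mp (htK t rfl)).trans ((hp _ (hsub (-t))).mp (htK (-t) (neg_sq t))).symm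
    have hw0 : w ≠ 0 := norm_ne_zero_iff.mp (hw ▸ one_ne_zero)
    have := smul_left_injective ℂ hw0 (add_left_cancel heq)
    norm_cast at this
    linarith
  · have hrK : ‖v‖ ^ 2 + r ^ 2 ≤ 1 := (hKw v hv r).mp <| (hball _ (hsub r)).mpr <| by
      rw [add_sub_cancel_left, norm_ofReal_smul_of_norm_eq_one hw, abs_of_pos hr]
    have htr : t ≤ r := by
      have := (hball _ (hsub t)).mp (htK t rfl)
      rwa [add_sub_cancel_left, norm_ofReal_smul_of_norm_eq_one hw, abs_of_pos ht] at this
    have hr2 : r ^ 2 = 1 - ‖v‖ ^ 2 := by nlinarith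
    rw [hball x hx]
    constructor <;> intro h <;> nlinarith [norm_nonneg (x - v)]

lemma IsBodyOfRev.mem_iff_eq_of_norm_eq_one (hK : IsBodyOfRev K L) (hwL : w ∈ Lᗮ)
    (hw : ‖w‖ = 1) (hKw : ∀ v ∈ L, ∀ t : ℝ, v + (t : ℂ) • w ∈ K ↔ ‖v‖ ^ 2 + t ^ 2 ≤ 1)
    (hv : v ∈ L) (hv1 : ‖v‖ = 1) {x : E} (hx : x - v ∈ Lᗮ) : x ∈ K ↔ x = v := by
  have hvK : v ∈ K := by simpa [hv1] using hKw v hv 0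
  have hvv : v - v ∈ Lᗮ := by simp
  rcases hK.slice_trichotomy hv with hempty | ⟨p, hp⟩ | ⟨r, hr, hball⟩
  · exact absurd hvK (hempty v hvv)
  · rw [hp x hx, ← (hp v hvv).mp hvK]
  · have hrK : v + (r : ℂ) • w ∈ K := (hball _ (by simpa using Lᗮ.smul_mem (r : ℂ) hwL)).mpr <| by
      rw [add_sub_cancel_left, norm_ofReal_smul_of_norm_eq_one hw, abs_of_pos hr]
    have := (hKw v hv r).mp hrK
    rw [hv1] at this
    nlinarith

/-- Scaled by `‖v‖⁻¹`, a point of the slice over `v` lands, by convexity, in the slice over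
a unit vector of `L`, which is a single point. -/
lemma IsBodyOfRev.notMem_of_one_lt_norm (hK : IsBodyOfRev K L) (hwL : w ∈ Lᗮ)
    (hw : ‖w‖ = 1) (hKw : ∀ v ∈ L, ∀ t : ℝ, v + (t : ℂ) • w ∈ K ↔ ‖v‖ ^ 2 + t ^ 2 ≤ 1)
    (hv : v ∈ L) (hv1 : 1 < ‖v‖) {x : E} (hx : x - v ∈ Lᗮ) : x ∉ K := by
  intro hxK
  set s := ‖v‖⁻¹
  have hs : 0 < s := inv_pos.mpr (by linarith)
  have h0K : (0 : E) ∈ K := by simpa using hKw 0 L.zero_mem 0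
  have hsxK : s • x ∈ K :=
    hK.2.1.2.1.smul_mem_of_zero_mem h0K hxK ⟨hs.le, inv_le_one_of_one_le₀ hv1.le⟩
  have hsv : ‖s • v‖ = 1 := by
    rw [norm_smul, Real.norm_eq_abs, abs_of_pos hs, inv_mul_cancel₀ (by linarith)]
  have hsx : s • x - s • v ∈ Lᗮ := by
    rw [← smul_sub]
    exact Lᗮ.smul_of_tower_mem s hx
  have hxv : x = v := smul_right_injective E hs.ne' <|
    (hK.mem_iff_eq_of_norm_eq_one hwL hw hKw (L.smul_of_tower_mem s hv) hsv hsx).mp hsxK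
  have := (hKw v hv 0).mp (by simpa [hxv] using hxK)
  nlinarith [norm_nonneg v]

lemma IsBodyOfRev.eq_closedBall (hK : IsBodyOfRev K L) (hwL : w ∈ Lᗮ) (hw : ‖w‖ = 1)
    (hKw : ∀ v ∈ L, ∀ t : ℝ, v + (t : ℂ) • w ∈ K ↔ ‖v‖ ^ 2 + t ^ 2 ≤ 1) :
    K = closedBall 0 1 := by
  have : FiniteDimensional ℂ L := Module.finite_of_finrank_eq_succ hK.2.2.1
  ext x
  set v := L.starProjection x
  have hv : v ∈ L := L.starProjection_apply_mem x
  have hx : x - v ∈ Lᗮ := L.sub_starProjection_mem_orthogonal x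
  have hpyth := norm_sq_eq_add_of_sub_mem_orthogonal hv hx
  rw [mem_closedBall_zero_iff, ← sq_le_one_iff₀ (norm_nonneg x), hpyth]
  rcases lt_trichotomy ‖v‖ 1 with hv1 | hv1 | hv1
  · exact hK.mem_iff_of_norm_lt_one hwL hw hKw hv hv1 hx
  · rw [hK.mem_iff_eq_of_norm_eq_one hwL hw hKw hv hv1 hx, hv1, ← sub_eq_zero, ← norm_eq_zero]
    constructor <;> intro h <;> nlinarith [norm_nonneg (x - v)]
  · refine iff_of_false (hK.notMem_of_one_lt_norm hwL hw hKw hv hv1 hx) ?_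
    nlinarith [norm_nonneg (x - v)]

end

theorem stmt19_general {n : ℕ} (hn : 3 ≤ n) (K : Set (Cn n)) (L : Submodule ℂ (Cn n))
    (hK : IsBodyOfRev K L)
    (Γ : Submodule ℂ (Cn n)) (hΓ : Module.finrank ℂ Γ = n - 1) (hLΓ : L ≤ Γ)
    (hΓK : (Γ : Set (Cn n)) ∩ K = (Γ : Set (Cn n)) ∩ closedBall 0 1) :
    K = closedBall 0 1 := by
  have hL : Module.finrank ℂ L = 1 := hK.2.2.1
  obtain ⟨w, hwΓ, hwL, hw⟩ :=
    exists_norm_eq_one_mem_orthogonal_of_finrank_lt (L := L) (Γ := Γ) (by omega)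
  refine hK.eq_closedBall hwL hw fun v hv t => ?_
  have hvt : v + (t : ℂ) • w ∈ Γ := Γ.add_mem (hLΓ hv) (Γ.smul_mem _ hwΓ)
  have hpyth := norm_sq_eq_add_of_sub_mem_orthogonal (x := v + (t : ℂ) • w) hv
    (by simpa using Lᗮ.smul_mem (t : ℂ) hwL)
  rw [add_sub_cancel_left, norm_ofReal_smul_of_norm_eq_one hw, sq_abs] at hpyth
  have := Set.ext_iff.mp hΓK (v + (t : ℂ) • w)
  simp only [Set.mem_inter_iff, SetLike.mem_coe, hvt, true_and, mem_closedBall_zero_iff] at this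
  rw [this, ← hpyth, sq_le_one_iff₀ (norm_nonneg _)]

/-- If a complex body of revolution `K ⊆ ℂⁿ` with axis `L` satisfies that its
sections by `H = L^⊥` and by some complex hyperplane `Γ` containing `L` are both
unit balls, then `K` is the unit ball. -/
theorem stmt19 {n : ℕ} (hn : 3 ≤ n) (K : Set (Cn n)) (L : Submodule ℂ (Cn n))
    (hK : IsBodyOfRev K L)
    (hH : (Lᗮ : Set (Cn n)) ∩ K = (Lᗮ : Set (Cn n)) ∩ closedBall 0 1)
    (Γ : Submodule ℂ (Cn n)) (hΓ : Module.finrank ℂ Γ = n - 1) (hLΓ : L ≤ Γ)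
    (hΓK : (Γ : Set (Cn n)) ∩ K = (Γ : Set (Cn n)) ∩ closedBall 0 1) :
    K = closedBall 0 1 :=
  stmt19_general hn K L hK Γ hΓ hLΓ hΓK
end
end
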